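/- arXiv:2508.01978 — 3 statements merged into one kernel-verified Lean document; each statement's English description precedes it below -/
import Mathlib

section
/- If (v_n) is total in H (its closed linear span is H), then there exists an orthonormal basis (indexed family) {u_n : u_n ≠ 0} of H such that u_n ∈ H_{⌈n/2⌉} for every n, where H_m := closure(span{v_k : k ≥ m}). -/
/-!
Since `H_m = ℂ v_m + H_{m+1}` (a closed subspace plus a line is closed), the gap
`H_m ⊖ H_{m+1}` is spanned by a single vector `e_m`, a unit vector or zero. The `e_m` are
orthonormal, and a vector orthogonal to all of them descends the tower `H_0 = H ⊇ H_1 ⊇ ⋯` into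
`H_∞`; so the `e_m` are an orthonormal basis of `H_∞ᗮ`. Putting `e_m` at position `2m` and a
Hilbert basis of the separable space `H_∞`, which is countable, at the odd positions gives `u`.
-/

/-- Tail spaces of a sequence: `H_m` is the closed linear span of `{v_k : k ≥ m}`. -/
noncomputable def tailSpace {H : Type*} [NormedAddCommGroup H] [InnerProductSpace ℂ H]
    (v : ℕ → H) (m : ℕ) : Submodule ℂ H :=
  (Submodule.span ℂ (v '' {k | m ≤ k})).topologicalClosure

open Submodule Set Function

section General

variable {𝕜 E ι κ : Type*} [RCLike 𝕜] [NormedAddCommGroup E] [InnerProductSpace 𝕜 E]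

local notation "⟪" x ", " y "⟫" => inner 𝕜 x y

theorem Orthonormal.countable [TopologicalSpace.SeparableSpace E] {v : ι → E}
    (hv : Orthonormal 𝕜 v) : Countable ι := by
  refine Pairwise.countable_of_isOpen_disjoint (s := fun i => Metric.ball (v i) (1 / 2))
    (fun i j hij => Metric.ball_disjoint_ball ?_) (fun _ => Metric.isOpen_ball)
    (fun _ => Metric.nonempty_ball.2 (by norm_num))
  have hsq : ‖v i - v j‖ ^ 2 = 2 := by
    rw [@norm_sub_sq 𝕜, hv.1, hv.1, hv.2 hij]
    norm_num
  rw [dist_eq_norm]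
  nlinarith [norm_nonneg (v i - v j)]

theorem separableSpace_of_topologicalClosure_span_eq_top [Countable ι] {v : ι → E}
    (hv : (span 𝕜 (range v)).topologicalClosure = ⊤) : TopologicalSpace.SeparableSpace E := by
  rw [← TopologicalSpace.isSeparable_univ_iff, ← top_coe (R := 𝕜), ← hv, topologicalClosure_coe]
  exact (countable_range v).isSeparable.span.closure

theorem exists_normalized_span_singleton_eq (w : E) :
    ∃ e : E, 𝕜 ∙ e = 𝕜 ∙ w ∧ (e ≠ 0 → ‖e‖ = 1) := by
  by_cases hw : w = 0
  · exact ⟨0, by rw [hw], fun h => (h rfl).elim⟩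
  · refine ⟨(‖w‖ : 𝕜)⁻¹ • w, span_singleton_smul_eq ?_ w, fun _ => norm_smul_inv_norm hw⟩
    simpa using hw

theorem orthogonal_inf_span_singleton_sup_eq (K' : Submodule 𝕜 E) [K'.HasOrthogonalProjection]
    (y : E) : K'ᗮ ⊓ (𝕜 ∙ y ⊔ K') = 𝕜 ∙ K'ᗮ.starProjection y := by
  apply le_antisymm
  · rintro x ⟨hx, hxy⟩
    obtain ⟨a, ha, k, hk, rfl⟩ := mem_sup.1 hxy
    obtain ⟨c, rfl⟩ := mem_span_singleton.1 ha
    rw [← starProjection_eq_self_iff.2 hx, map_add, map_smul,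
      (starProjection_apply_eq_zero_iff _).2 (K'.le_orthogonal_orthogonal hk), add_zero]
    exact smul_mem _ _ (mem_span_singleton_self _)
  · rw [span_singleton_le_iff_mem]
    refine ⟨K'ᗮ.starProjection_apply_mem y, ?_⟩
    rw [starProjection_orthogonal_val]
    exact sub_mem (mem_sup_left (mem_span_singleton_self y)) (mem_sup_right (coe_mem _))

theorem mem_of_mem_of_mem_orthogonal_inf {K₁ K₂ : Submodule 𝕜 E} [K₁.HasOrthogonalProjection]
    (h : K₁ ≤ K₂) {x : E} (hx : x ∈ K₂) (hx' : x ∈ (K₁ᗮ ⊓ K₂)ᗮ) : x ∈ K₁ := by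
  rw [← sup_orthogonal_inf_of_hasOrthogonalProjection h] at hx
  obtain ⟨a, ha, b, hb, rfl⟩ := mem_sup.1 hx
  have hb' : b ∈ (K₁ᗮ ⊓ K₂)ᗮ := by
    simpa using sub_mem hx' (le_orthogonal_orthogonal K₁ |>.trans (orthogonal_le inf_le_left) ha)
  rw [(mem_bot 𝕜).1 ((orthogonal_disjoint _).le_bot (mem_inf.2 ⟨hb, hb'⟩)), add_zero]
  exact ha

/-- `u` lists a Hilbert basis of `K`, padded with zero vectors. -/
structure IsPaddedHilbertBasis (K : Submodule 𝕜 E) (u : ι → E) : Prop where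
  mem : ∀ i, u i ∈ K
  norm_eq_one : ∀ i, u i ≠ 0 → ‖u i‖ = 1
  inner_eq_zero : Pairwise fun i j => ⟪u i, u j⟫ = 0
  eq_zero_of_forall_inner_eq_zero : ∀ x ∈ K, (∀ i, ⟪u i, x⟫ = 0) → x = 0

namespace IsPaddedHilbertBasis

variable {K : Submodule 𝕜 E} {u : ι → E}

theorem orthonormal (hu : IsPaddedHilbertBasis K u) :
    Orthonormal 𝕜 fun i : {i // u i ≠ 0} => u i :=
  ⟨fun i => hu.norm_eq_one i i.2, fun _ _ hij => hu.inner_eq_zero (Subtype.coe_ne_coe.2 hij)⟩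

theorem topologicalClosure_span_eq_top [CompleteSpace E]
    (hu : IsPaddedHilbertBasis (⊤ : Submodule 𝕜 E) u) :
    (span 𝕜 (range fun i : {i // u i ≠ 0} => u i)).topologicalClosure = ⊤ := by
  rw [topologicalClosure_eq_top_iff, eq_bot_iff]
  refine fun x hx => hu.eq_zero_of_forall_inner_eq_zero x trivial fun i => ?_
  by_cases hi : u i = 0
  · rw [hi, inner_zero_left]
  · exact inner_right_of_mem_orthogonal
      (subset_span (mem_range_self (⟨i, hi⟩ : {i // u i ≠ 0}))) hx

theorem extend (hu : IsPaddedHilbertBasis K u) {g : ι → κ} (hg : Injective g) :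
    IsPaddedHilbertBasis K (Function.extend g u (0 : κ → E)) := by
  have hcases : ∀ j, (∃ i, g i = j ∧ Function.extend g u (0 : κ → E) j = u i) ∨
      Function.extend g u (0 : κ → E) j = 0 := by
    intro j
    by_cases hj : ∃ i, g i = j
    · obtain ⟨i, rfl⟩ := hj
      exact Or.inl ⟨i, rfl, hg.extend_apply u 0 i⟩
    · exact Or.inr (Function.extend_apply' (f := g) u 0 j hj)
  refine ⟨fun j => ?_, fun j hj => ?_, fun j j' hjj' => ?_, fun x hx h => ?_⟩
  · rcases hcases j with ⟨i, -, hi⟩ | h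
    · exact hi ▸ hu.mem i
    · exact h ▸ K.zero_mem
  · rcases hcases j with ⟨i, -, hi⟩ | h
    · exact hi ▸ hu.norm_eq_one i (hi ▸ hj)
    · exact (hj h).elim
  · rcases hcases j with ⟨i, rfl, hi⟩ | h
    · rcases hcases j' with ⟨i', rfl, hi'⟩ | h'
      · rw [hi, hi']
        exact hu.inner_eq_zero fun hii' => hjj' (congrArg g hii')
      · rw [h', inner_zero_right]
    · rw [h, inner_zero_left]
  · exact hu.eq_zero_of_forall_inner_eq_zero x hx fun i => hg.extend_apply u 0 i ▸ h (g i)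

theorem sumElim [K.HasOrthogonalProjection] {w : κ → E} (hu : IsPaddedHilbertBasis Kᗮ u)
    (hw : IsPaddedHilbertBasis K w) :
    IsPaddedHilbertBasis (⊤ : Submodule 𝕜 E) (Sum.elim u w) := by
  refine ⟨fun _ => trivial, ?_, ?_, fun x _ h => ?_⟩
  · rintro (i | j)
    exacts [hu.norm_eq_one i, hw.norm_eq_one j]
  · rintro (i | j) (i' | j') hne
    · exact hu.inner_eq_zero fun h => hne (congrArg Sum.inl h)
    · exact inner_left_of_mem_orthogonal (hw.mem j') (hu.mem i)
    · exact inner_right_of_mem_orthogonal (hw.mem j) (hu.mem i')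
    · exact hw.inner_eq_zero fun h => hne (congrArg Sum.inr h)
  obtain ⟨y, hy, z, hz, rfl⟩ := K.exists_add_mem_mem_orthogonal x
  have hz0 : z = 0 := hu.eq_zero_of_forall_inner_eq_zero z hz fun i => by
    simpa [inner_add_right, inner_left_of_mem_orthogonal hy (hu.mem i)] using h (.inl i)
  have hy0 : y = 0 := hw.eq_zero_of_forall_inner_eq_zero y hy fun j => by
    simpa [inner_add_right, inner_right_of_mem_orthogonal (hw.mem j) hz] using h (.inr j)
  rw [hy0, hz0, add_zero]

end IsPaddedHilbertBasis

theorem HilbertBasis.isPaddedHilbertBasis {K : Submodule 𝕜 E} (b : HilbertBasis ι 𝕜 K) :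
    IsPaddedHilbertBasis K fun i => (b i : E) := by
  refine ⟨fun i => (b i).2, fun i _ => ?_, fun i j hij => ?_, fun x hx h => ?_⟩
  · simpa using b.orthonormal.1 i
  · simpa using b.orthonormal.2 hij
  · have : b.repr ⟨x, hx⟩ = 0 := by
      ext i
      simpa [b.repr_apply_apply] using h i
    simpa using this

theorem isPaddedHilbertBasis_orthogonal_iInf {K : ℕ → Submodule 𝕜 E}
    [∀ m, (K m).HasOrthogonalProjection] (hK : Antitone K) (h0 : K 0 = ⊤) {e : ℕ → E}
    (he : ∀ m, 𝕜 ∙ e m = (K (m + 1))ᗮ ⊓ K m) (hnorm : ∀ m, e m ≠ 0 → ‖e m‖ = 1) :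
    IsPaddedHilbertBasis (⨅ m, K m)ᗮ e := by
  have hmem : ∀ m, e m ∈ (K (m + 1))ᗮ ⊓ K m := fun m => he m ▸ mem_span_singleton_self _
  refine ⟨fun m => orthogonal_le (iInf_le K (m + 1)) (hmem m).1, hnorm, fun m m' hne => ?_,
    fun x hx h => ?_⟩
  · rcases hne.lt_or_gt with hlt | hlt
    · exact inner_left_of_mem_orthogonal (hK hlt (hmem m').2) (hmem m).1
    · exact inner_right_of_mem_orthogonal (hK hlt (hmem m).2) (hmem m').1
  have hx' : x ∈ ⨅ m, K m := by
    refine (mem_iInf K).2 fun m => ?_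
    induction m with
    | zero => exact h0 ▸ mem_top
    | succ m ih =>
      refine mem_of_mem_of_mem_orthogonal_inf (hK m.le_succ) ih ?_
      exact he m ▸ mem_orthogonal_singleton_iff_inner_right.2 (h m)
  exact (mem_bot 𝕜).1 ((orthogonal_disjoint _).le_bot (mem_inf.2 ⟨hx', hx⟩))

end General

section TailSpace

variable {H : Type*} [NormedAddCommGroup H] [InnerProductSpace ℂ H] (v : ℕ → H)

theorem isClosed_tailSpace (m : ℕ) : IsClosed (tailSpace v m : Set H) :=
  isClosed_topologicalClosure _

instance [CompleteSpace H] (m : ℕ) : (tailSpace v m).HasOrthogonalProjection :=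
  haveI := (isClosed_tailSpace v m).completeSpace_coe
  inferInstance

theorem mem_tailSpace {m k : ℕ} (h : m ≤ k) : v k ∈ tailSpace v m :=
  le_topologicalClosure _ (subset_span ⟨k, h, rfl⟩)

theorem tailSpace_antitone : Antitone (tailSpace v) := fun _ _ hmn =>
  topologicalClosure_mono (span_mono (image_mono fun _ hk => hmn.trans hk))

theorem tailSpace_zero (hv : (span ℂ (range v)).topologicalClosure = ⊤) : tailSpace v 0 = ⊤ := by
  rw [tailSpace, ← hv, ← image_univ]
  congr!
  exact eq_univ_of_forall Nat.zero_le

theorem tailSpace_eq_span_singleton_sup (m : ℕ) :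
    tailSpace v m = ℂ ∙ v m ⊔ tailSpace v (m + 1) := by
  refine le_antisymm (topologicalClosure_minimal _ ?_ ?_) ?_
  · rw [span_le]
    rintro _ ⟨k, hk, rfl⟩
    rcases (show m ≤ k from hk).eq_or_lt with rfl | hlt
    · exact mem_sup_left (mem_span_singleton_self _)
    · exact mem_sup_right (mem_tailSpace v hlt)
  · rw [sup_comm]
    exact isClosed_sup_finiteDimensional _ _ (isClosed_tailSpace v (m + 1))
  · exact sup_le (span_singleton_le_iff_mem _ _ |>.2 (mem_tailSpace v le_rfl))
      (tailSpace_antitone v m.le_succ)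

theorem exists_span_singleton_eq_orthogonal_inf_tailSpace [CompleteSpace H] (m : ℕ) :
    ∃ e : H, ℂ ∙ e = (tailSpace v (m + 1))ᗮ ⊓ tailSpace v m ∧ (e ≠ 0 → ‖e‖ = 1) := by
  rw [tailSpace_eq_span_singleton_sup v m, orthogonal_inf_span_singleton_sup_eq]
  exact exists_normalized_span_singleton_eq _

end TailSpace

/-- If `(v_n)_{n≥1}` is total, there is a family `(u_n)_{n≥1}` whose nonzero members form an
orthonormal basis of `H`, with `u_n ∈ H_{⌈n/2⌉}` for every `n ≥ 1`. -/
theorem exists_adapted_orthonormal_basis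
    {H : Type*} [NormedAddCommGroup H] [InnerProductSpace ℂ H] [CompleteSpace H]
    (v : ℕ → H)
    (hv : (Submodule.span ℂ (Set.range v)).topologicalClosure = ⊤) :
    ∃ u : ℕ → H,
      Orthonormal ℂ (fun n : {n : ℕ // u n ≠ 0} => u n) ∧
      (Submodule.span ℂ (Set.range fun n : {n : ℕ // u n ≠ 0} => u n)).topologicalClosure = ⊤ ∧
      ∀ n : ℕ, 1 ≤ n → u n ∈ tailSpace v ((n + 1) / 2) := by
  have := separableSpace_of_topologicalClosure_span_eq_top hv
  set Hinf := ⨅ m, tailSpace v m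
  have hclosed : IsClosed (Hinf : Set H) := by
    simpa only [Hinf, coe_iInf] using isClosed_iInter (isClosed_tailSpace v)
  have := hclosed.completeSpace_coe
  choose e he hnorm using exists_span_singleton_eq_orthogonal_inf_tailSpace v
  have hE := isPaddedHilbertBasis_orthogonal_iInf (tailSpace_antitone v) (tailSpace_zero v hv)
    he hnorm
  obtain ⟨W, b, -⟩ := exists_hilbertBasis ℂ Hinf
  have := b.orthonormal.countable
  obtain ⟨g, hg⟩ := exists_injective_nat W
  have hF := b.isPaddedHilbertBasis.extend hg
  have hU := (hE.sumElim hF).extend Equiv.natSumNatEquivNat.injective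
  refine ⟨_, hU.orthonormal, hU.topologicalClosure_span_eq_top, fun n _ => ?_⟩
  obtain ⟨s, rfl⟩ := Equiv.natSumNatEquivNat.surjective n
  rw [Equiv.natSumNatEquivNat.injective.extend_apply]
  rcases s with m | k
  · have hm : (2 * m + 1) / 2 = m := by omega
    simpa [Equiv.natSumNatEquivNat_apply, hm] using (he m ▸ mem_span_singleton_self (e m)).2
  · have hk : (2 * k + 1 + 1) / 2 = k + 1 := by omega
    simpa [Equiv.natSumNatEquivNat_apply, hk] using iInf_le (tailSpace v) (k + 1) (hF.mem k)
end

section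
/- Let (u_n) be an orthonormal sequence in H and (z_n) a sequence with ‖u_n − z_n‖ ≤ ε_n where Σ ε_n² < 1. Then the series T := Σ_n u_n (u_n − z_n)^* converges in operator norm and ‖T‖ ≤ (Σ_n ε_n²)^{1/2} < 1. -/
open scoped InnerProductSpace

/-- The rank-one operator `a b^* : x ↦ ⟪b, x⟫ • a`. -/
noncomputable def rankOne {H : Type*} [NormedAddCommGroup H] [InnerProductSpace ℂ H]
    (a b : H) : H →L[ℂ] H :=
  (innerSL ℂ b).smulRight a

lemma key_bound {H : Type*} [NormedAddCommGroup H] [InnerProductSpace ℂ H]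
    (u v : ℕ → H) (hu : Orthonormal ℂ u) (s : Finset ℕ) :
    ‖∑ n ∈ s, rankOne (u n) (v n)‖ ≤ Real.sqrt (∑ n ∈ s, ‖v n‖ ^ 2) := by
  apply ContinuousLinearMap.opNorm_le_bound _ (Real.sqrt_nonneg _)
  intro x
  have hx : (∑ n ∈ s, rankOne (u n) (v n)) x = ∑ n ∈ s, ⟪v n, x⟫_ℂ • u n := by
    simp [rankOne, ContinuousLinearMap.sum_apply]
  rw [hx]
  have h1 : ‖∑ n ∈ s, ⟪v n, x⟫_ℂ • u n‖ ^ 2 = ∑ n ∈ s, ‖⟪v n, x⟫_ℂ‖ ^ 2 := by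
    rw [← inner_self_eq_norm_sq (𝕜 := ℂ), hu.inner_sum, map_sum]
    exact Finset.sum_congr rfl fun n _ => by rw [RCLike.conj_mul]; norm_cast
  have h2 : ∑ n ∈ s, ‖⟪v n, x⟫_ℂ‖ ^ 2 ≤ (∑ n ∈ s, ‖v n‖ ^ 2) * ‖x‖ ^ 2 := by
    rw [Finset.sum_mul]
    refine Finset.sum_le_sum fun n _ => ?_
    calc ‖⟪v n, x⟫_ℂ‖ ^ 2 ≤ (‖v n‖ * ‖x‖) ^ 2 :=
          pow_le_pow_left₀ (norm_nonneg _) (norm_inner_le_norm _ _) 2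
      _ = ‖v n‖ ^ 2 * ‖x‖ ^ 2 := mul_pow _ _ 2
  have h3 : ‖∑ n ∈ s, ⟪v n, x⟫_ℂ • u n‖ = Real.sqrt (∑ n ∈ s, ‖⟪v n, x⟫_ℂ‖ ^ 2) := by
    rw [← h1, Real.sqrt_sq (norm_nonneg _)]
  rw [h3]
  calc Real.sqrt (∑ n ∈ s, ‖⟪v n, x⟫_ℂ‖ ^ 2)
      ≤ Real.sqrt ((∑ n ∈ s, ‖v n‖ ^ 2) * ‖x‖ ^ 2) := Real.sqrt_le_sqrt h2
    _ = Real.sqrt (∑ n ∈ s, ‖v n‖ ^ 2) * ‖x‖ := by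
        rw [Real.sqrt_mul (Finset.sum_nonneg fun n _ => sq_nonneg _), Real.sqrt_sq (norm_nonneg _)]

/-- Small perturbation operator: `T := Σ_n u_n (u_n - z_n)^*` converges in operator norm and
`‖T‖ ≤ (Σ ε_n²)^{1/2} < 1`. -/
theorem small_perturbation_operator
    {H : Type*} [NormedAddCommGroup H] [InnerProductSpace ℂ H] [CompleteSpace H]
    (u z : ℕ → H) (hu : Orthonormal ℂ u) (ε : ℕ → ℝ)
    (hε : ∀ n, 0 < ε n) (hεz : ∀ n, ‖u n - z n‖ ≤ ε n)
    (hsum : Summable fun n => ε n ^ 2) (hlt : ∑' n, ε n ^ 2 < 1) :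
    ∃ T : H →L[ℂ] H,
      Filter.Tendsto (fun N : ℕ => ∑ n ∈ Finset.range N, rankOne (u n) (u n - z n))
        Filter.atTop (nhds T) ∧
      ‖T‖ ≤ Real.sqrt (∑' n, ε n ^ 2) ∧ Real.sqrt (∑' n, ε n ^ 2) < 1 := by
  set v : ℕ → H := fun n => u n - z n with hv
  have hbound : ∀ s : Finset ℕ, ‖∑ n ∈ s, rankOne (u n) (v n)‖ ≤ Real.sqrt (∑ n ∈ s, ε n ^ 2) := by
    intro s
    refine (key_bound u v hu s).trans (Real.sqrt_le_sqrt ?_)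
    exact Finset.sum_le_sum fun n _ => pow_le_pow_left₀ (norm_nonneg _) (hεz n) 2
  have hsummable : Summable fun n => rankOne (u n) (v n) := by
    rw [summable_iff_vanishing]
    intro e he
    obtain ⟨r, hr, hre⟩ := Metric.mem_nhds_iff.1 he
    obtain ⟨s, hs⟩ := (summable_iff_vanishing.1 hsum) (Metric.ball 0 (r ^ 2))
      (Metric.ball_mem_nhds 0 (by positivity))
    refine ⟨s, fun t ht => ?_⟩
    apply hre
    rw [Metric.mem_ball, dist_zero_right]
    calc ‖∑ n ∈ t, rankOne (u n) (v n)‖ ≤ Real.sqrt (∑ n ∈ t, ε n ^ 2) := hbound t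
      _ < r := by
          have := hs t ht
          rw [Metric.mem_ball, dist_zero_right, Real.norm_eq_abs] at this
          have h' : ∑ n ∈ t, ε n ^ 2 < r ^ 2 := lt_of_le_of_lt (le_abs_self _) this
          calc Real.sqrt (∑ n ∈ t, ε n ^ 2) < Real.sqrt (r ^ 2) := by
                apply Real.sqrt_lt_sqrt (Finset.sum_nonneg fun n _ => sq_nonneg _) h'
            _ = r := Real.sqrt_sq hr.le
  refine ⟨∑' n, rankOne (u n) (v n), hsummable.hasSum.tendsto_sum_nat, ?_, ?_⟩
  · refine le_of_tendsto (hsummable.hasSum.tendsto_sum_nat.norm) ?_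
    filter_upwards with N
    refine (hbound (Finset.range N)).trans (Real.sqrt_le_sqrt ?_)
    exact Summable.sum_le_tsum _ (fun n _ => sq_nonneg _) hsum
  · rw [show (1 : ℝ) = Real.sqrt 1 by simp]
    exact Real.sqrt_lt_sqrt (tsum_nonneg fun n => sq_nonneg _) hlt
end

section
/- Suppose id_H = Σ_n w_n z_n^* (SOT) where each z_n = Σ_{k≥⌈n/2⌉} γ_k^{(n)} v_k is a finite tail combination, and let (a_k) be positive weights. Set C(a) := Σ_n 2^n ‖w_n‖² Σ_{k≥⌈n/2⌉} |γ_k^{(n)}|²/a_k and assume C(a) < ∞. Then ‖x‖² ≤ C(a) Σ_{k=1}^∞ a_k |⟨v_k, x⟩|² for all x ∈ H; equivalently, with λ_k := C(a)·a_k > 0, ‖x‖² ≤ Σ_k λ_k |⟨v_k, x⟩|². -/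
open scoped InnerProductSpace ENNReal

-- weighted Cauchy-Schwarz for finite sums
lemma aux_cs {ι : Type*} (s : Finset ι) (f t a : ι → ℝ) (ha : ∀ k, 0 < a k) :
    (∑ k ∈ s, f k * t k) ^ 2 ≤ (∑ k ∈ s, f k ^ 2 / a k) * ∑ k ∈ s, a k * t k ^ 2 := by
  have h := Finset.sum_mul_sq_le_sq_mul_sq s (fun k => f k / Real.sqrt (a k))
      (fun k => Real.sqrt (a k) * t k)
  have e1 : ∀ k, f k / Real.sqrt (a k) * (Real.sqrt (a k) * t k) = f k * t k := by
    intro k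
    have : Real.sqrt (a k) ≠ 0 := ne_of_gt (Real.sqrt_pos.2 (ha k))
    field_simp
  have e2 : ∀ k, (f k / Real.sqrt (a k)) ^ 2 = f k ^ 2 / a k := by
    intro k
    rw [div_pow, Real.sq_sqrt (ha k).le]
  have e3 : ∀ k, (Real.sqrt (a k) * t k) ^ 2 = a k * t k ^ 2 := by
    intro k
    rw [mul_pow, Real.sq_sqrt (ha k).le]
  simpa only [e1, e2, e3] using h

lemma aux_partial (u : ℕ → ℝ) (hu : ∀ n, 0 ≤ u n)
    (hsum : Summable fun n => (2 : ℝ) ^ (n + 1) * u n ^ 2) :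
    ∀ N, ∑ n ∈ Finset.range N, u n ≤ Real.sqrt (∑' n, (2 : ℝ) ^ (n + 1) * u n ^ 2) := by
  intro N
  set b : ℕ → ℝ := fun n => (2 : ℝ) ^ (n + 1) * u n ^ 2 with hb
  have hbnn : ∀ n, 0 ≤ b n := fun n => by positivity
  have hT : 0 ≤ ∑' n, b n := tsum_nonneg hbnn
  have key : ∀ n, Real.sqrt ((1 / 2 : ℝ) ^ (n + 1)) * Real.sqrt (b n) = u n := by
    intro n
    rw [← Real.sqrt_mul (by positivity)]
    have h1 : (1 / 2 : ℝ) ^ (n + 1) * (2 : ℝ) ^ (n + 1) = 1 := by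
      rw [← mul_pow]; norm_num
    have h2 : (1 / 2 : ℝ) ^ (n + 1) * b n = u n ^ 2 := by
      rw [hb]; rw [← mul_assoc, h1, one_mul]
    rw [h2, Real.sqrt_sq (hu n)]
  have hgeo : ∑ n ∈ Finset.range N, (1 / 2 : ℝ) ^ (n + 1) ≤ 1 := by
    have h := sum_geometric_two_le N
    have : ∑ n ∈ Finset.range N, (1 / 2 : ℝ) ^ (n + 1)
        = (1 / 2) * ∑ n ∈ Finset.range N, (1 / 2 : ℝ) ^ n := by
      rw [Finset.mul_sum]; exact Finset.sum_congr rfl fun n _ => by rw [pow_succ']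
    rw [this]; linarith
  have hcs := Finset.sum_mul_sq_le_sq_mul_sq (Finset.range N)
      (fun n => Real.sqrt ((1 / 2 : ℝ) ^ (n + 1))) (fun n => Real.sqrt (b n))
  have e2 : ∀ n, Real.sqrt ((1 / 2 : ℝ) ^ (n + 1)) ^ 2 = (1 / 2 : ℝ) ^ (n + 1) :=
    fun n => Real.sq_sqrt (by positivity)
  have e3 : ∀ n, Real.sqrt (b n) ^ 2 = b n := fun n => Real.sq_sqrt (hbnn n)
  simp only [key, e2, e3] at hcs
  have hle : (∑ n ∈ Finset.range N, u n) ^ 2 ≤ ∑' n, b n := by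
    calc (∑ n ∈ Finset.range N, u n) ^ 2
        ≤ (∑ n ∈ Finset.range N, (1 / 2 : ℝ) ^ (n + 1)) * ∑ n ∈ Finset.range N, b n := hcs
      _ ≤ 1 * ∑' n, b n := by
          apply mul_le_mul hgeo (Summable.sum_le_tsum _ (fun n _ => hbnn n) hsum)
            (Finset.sum_nonneg fun n _ => hbnn n) (by norm_num)
      _ = ∑' n, b n := one_mul _
  have hnn : 0 ≤ ∑ n ∈ Finset.range N, u n := Finset.sum_nonneg fun n _ => hu n
  exact (Real.le_sqrt hnn hT).2 hle

lemma aux_norm_sq_le {H : Type*} [NormedAddCommGroup H] [InnerProductSpace ℂ H]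
    (w z : ℕ → H) (x : H)
    (hid : Filter.Tendsto (fun N : ℕ => ∑ n ∈ Finset.range N, ⟪z n, x⟫_ℂ • w n)
      Filter.atTop (nhds x))
    (hsum : Summable fun n : ℕ => (2 : ℝ) ^ (n + 1) * (‖⟪z n, x⟫_ℂ‖ * ‖w n‖) ^ 2) :
    ‖x‖ ^ 2 ≤ ∑' n : ℕ, (2 : ℝ) ^ (n + 1) * (‖⟪z n, x⟫_ℂ‖ * ‖w n‖) ^ 2 := by
  by_cases hx : x = 0
  · simp [hx]
  set u : ℕ → ℝ := fun n => ‖⟪z n, x⟫_ℂ‖ * ‖w n‖ with hu_def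
  set T : ℝ := ∑' n : ℕ, (2 : ℝ) ^ (n + 1) * u n ^ 2 with hT_def
  have hT : 0 ≤ T := tsum_nonneg fun n => by positivity
  have hu : ∀ n, 0 ≤ u n := fun n => mul_nonneg (norm_nonneg _) (norm_nonneg _)
  have hP := aux_partial u hu hsum
  have htend : Filter.Tendsto
      (fun N : ℕ => ‖⟪x, ∑ n ∈ Finset.range N, ⟪z n, x⟫_ℂ • w n⟫_ℂ‖)
      Filter.atTop (nhds ‖⟪x, x⟫_ℂ‖) :=
    (Filter.Tendsto.inner tendsto_const_nhds hid).norm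
  have hbd : ∀ N : ℕ, ‖⟪x, ∑ n ∈ Finset.range N, ⟪z n, x⟫_ℂ • w n⟫_ℂ‖
      ≤ Real.sqrt T * ‖x‖ := by
    intro N
    calc ‖⟪x, ∑ n ∈ Finset.range N, ⟪z n, x⟫_ℂ • w n⟫_ℂ‖
        = ‖∑ n ∈ Finset.range N, ⟪z n, x⟫_ℂ * ⟪x, w n⟫_ℂ‖ := by
          rw [inner_sum]
          simp only [inner_smul_right]
      _ ≤ ∑ n ∈ Finset.range N, ‖⟪z n, x⟫_ℂ * ⟪x, w n⟫_ℂ‖ := norm_sum_le _ _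
      _ ≤ ∑ n ∈ Finset.range N, u n * ‖x‖ := by
          apply Finset.sum_le_sum
          intro n _
          rw [norm_mul, hu_def]
          calc ‖⟪z n, x⟫_ℂ‖ * ‖⟪x, w n⟫_ℂ‖
              ≤ ‖⟪z n, x⟫_ℂ‖ * (‖x‖ * ‖w n‖) :=
                mul_le_mul_of_nonneg_left (norm_inner_le_norm x (w n)) (norm_nonneg _)
            _ = ‖⟪z n, x⟫_ℂ‖ * ‖w n‖ * ‖x‖ := by ring
      _ = (∑ n ∈ Finset.range N, u n) * ‖x‖ := (Finset.sum_mul _ _ _).symm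
      _ ≤ Real.sqrt T * ‖x‖ :=
          mul_le_mul_of_nonneg_right (hP N) (norm_nonneg _)
  have hlim : ‖⟪x, x⟫_ℂ‖ ≤ Real.sqrt T * ‖x‖ :=
    le_of_tendsto htend (Filter.Eventually.of_forall hbd)
  have hxx : ‖⟪x, x⟫_ℂ‖ = ‖x‖ ^ 2 := by
    rw [inner_self_eq_norm_sq_to_K]
    simp [norm_pow]
  rw [hxx] at hlim
  have hxpos : 0 < ‖x‖ := norm_pos_iff.2 hx
  have h1 : ‖x‖ ≤ Real.sqrt T := by nlinarith [hlim, hxpos]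
  calc ‖x‖ ^ 2 ≤ Real.sqrt T ^ 2 := pow_le_pow_left₀ (norm_nonneg x) h1 2
    _ = T := Real.sq_sqrt hT

/-- General lower frame inequality via weights. Sequences `(w_n), (z_n)` are indexed from `0`
(representing the original index `n = (index) + 1`, so `2^n` becomes `2^(n+1)` and
`⌈n/2⌉` becomes `(n+2)/2` in natural division). Each `z_n` is a finite tail combination
`Σ_{k ≥ ⌈n/2⌉} γ_k^{(n)} v_k`, recorded by a finitely supported `γ n : ℕ →₀ ℂ`. -/
theorem weighted_lower_frame_inequality
    {H : Type*} [NormedAddCommGroup H] [InnerProductSpace ℂ H] [CompleteSpace H]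
    (v w z : ℕ → H) (γ : ℕ → (ℕ →₀ ℂ)) (a : ℕ → ℝ) (ha : ∀ k, 0 < a k)
    (htail : ∀ n, ∀ k ∈ (γ n).support, (n + 2) / 2 ≤ k)
    (hz : ∀ n, z n = ∑ k ∈ (γ n).support, γ n k • v k)
    (hid : ∀ x : H,
      Filter.Tendsto (fun N : ℕ => ∑ n ∈ Finset.range N, ⟪z n, x⟫_ℂ • w n)
        Filter.atTop (nhds x))
    (C : ℝ)
    (hCsum : Summable fun n : ℕ =>
      (2 : ℝ) ^ (n + 1) * ‖w n‖ ^ 2 * ∑ k ∈ (γ n).support, ‖γ n k‖ ^ 2 / a k)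
    (hC : C = ∑' n : ℕ,
      (2 : ℝ) ^ (n + 1) * ‖w n‖ ^ 2 * ∑ k ∈ (γ n).support, ‖γ n k‖ ^ 2 / a k) :
    ∀ x : H,
      ENNReal.ofReal (‖x‖ ^ 2) ≤
        ENNReal.ofReal C * ∑' k : ℕ, ENNReal.ofReal (a k * ‖⟪v k, x⟫_ℂ‖ ^ 2) ∧
      ENNReal.ofReal (‖x‖ ^ 2) ≤
        ∑' k : ℕ, ENNReal.ofReal ((C * a k) * ‖⟪v k, x⟫_ℂ‖ ^ 2) := by

  intro x
  set c : ℕ → ℝ := fun n =>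
    (2 : ℝ) ^ (n + 1) * ‖w n‖ ^ 2 * ∑ k ∈ (γ n).support, ‖γ n k‖ ^ 2 / a k with hc_def
  have hcnn : ∀ n, 0 ≤ c n := fun n =>
    mul_nonneg (by positivity)
      (Finset.sum_nonneg fun k _ => div_nonneg (by positivity) (ha k).le)
  have hCnn : 0 ≤ C := hC ▸ tsum_nonneg hcnn
  set S : ℝ≥0∞ := ∑' k : ℕ, ENNReal.ofReal (a k * ‖⟪v k, x⟫_ℂ‖ ^ 2) with hS_def
  set b : ℕ → ℝ := fun n => (2 : ℝ) ^ (n + 1) * (‖⟪z n, x⟫_ℂ‖ * ‖w n‖) ^ 2 with hb_def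
  have hbnn : ∀ n, 0 ≤ b n := fun n => by positivity
  -- Cauchy–Schwarz for each z n
  have hzbound : ∀ n, ‖⟪z n, x⟫_ℂ‖ ^ 2 ≤
      (∑ k ∈ (γ n).support, ‖γ n k‖ ^ 2 / a k) *
        ∑ k ∈ (γ n).support, a k * ‖⟪v k, x⟫_ℂ‖ ^ 2 := by
    intro n
    have h1 : ‖⟪z n, x⟫_ℂ‖ ≤ ∑ k ∈ (γ n).support, ‖γ n k‖ * ‖⟪v k, x⟫_ℂ‖ := by
      rw [hz n, sum_inner]
      refine (norm_sum_le _ _).trans ?_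
      refine Finset.sum_le_sum fun k _ => ?_
      rw [inner_smul_left, norm_mul, RCLike.norm_conj]
    have h2 := aux_cs (γ n).support (fun k => ‖γ n k‖) (fun k => ‖⟪v k, x⟫_ℂ‖) a ha
    calc ‖⟪z n, x⟫_ℂ‖ ^ 2
        ≤ (∑ k ∈ (γ n).support, ‖γ n k‖ * ‖⟪v k, x⟫_ℂ‖) ^ 2 :=
          pow_le_pow_left₀ (norm_nonneg _) h1 2
      _ ≤ _ := h2
  -- termwise ENNReal bound
  have hb_le : ∀ n, ENNReal.ofReal (b n) ≤ ENNReal.ofReal (c n) * S := by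
    intro n
    set e : ℝ := ∑ k ∈ (γ n).support, a k * ‖⟪v k, x⟫_ℂ‖ ^ 2 with he_def
    have hreal : b n ≤ c n * e := by
      have h2n : (0:ℝ) ≤ (2 : ℝ) ^ (n + 1) * ‖w n‖ ^ 2 := by positivity
      calc b n = ((2 : ℝ) ^ (n + 1) * ‖w n‖ ^ 2) * ‖⟪z n, x⟫_ℂ‖ ^ 2 := by
            rw [hb_def]; ring
        _ ≤ ((2 : ℝ) ^ (n + 1) * ‖w n‖ ^ 2) *
            ((∑ k ∈ (γ n).support, ‖γ n k‖ ^ 2 / a k) * e) :=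
            mul_le_mul_of_nonneg_left (hzbound n) h2n
        _ = c n * e := by rw [hc_def]; ring
    have hE : ENNReal.ofReal e ≤ S := by
      rw [he_def, ENNReal.ofReal_sum_of_nonneg
        (fun k _ => mul_nonneg (ha k).le (by positivity))]
      exact ENNReal.sum_le_tsum _
    calc ENNReal.ofReal (b n) ≤ ENNReal.ofReal (c n * e) :=
          ENNReal.ofReal_le_ofReal hreal
      _ = ENNReal.ofReal (c n) * ENNReal.ofReal e := ENNReal.ofReal_mul (hcnn n)
      _ ≤ ENNReal.ofReal (c n) * S := mul_le_mul_right hE _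
  -- main inequality
  have main : ENNReal.ofReal (‖x‖ ^ 2) ≤ ENNReal.ofReal C * S := by
    have h1 : ENNReal.ofReal (‖x‖ ^ 2) ≤ ∑' n, ENNReal.ofReal (b n) := by
      by_cases hT : (∑' n, ENNReal.ofReal (b n)) = ⊤
      · rw [hT]; exact le_top
      · have hsumb : Summable b := by
          have h := ENNReal.summable_toReal hT
          refine h.congr fun n => ?_
          exact ENNReal.toReal_ofReal (hbnn n)
        have hA := aux_norm_sq_le w z x (hid x) hsumb
        calc ENNReal.ofReal (‖x‖ ^ 2) ≤ ENNReal.ofReal (∑' n, b n) :=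
              ENNReal.ofReal_le_ofReal hA
          _ = ∑' n, ENNReal.ofReal (b n) :=
              ENNReal.ofReal_tsum_of_nonneg hbnn hsumb
    have h2 : (∑' n, ENNReal.ofReal (b n)) ≤ ENNReal.ofReal C * S :=
      calc (∑' n, ENNReal.ofReal (b n)) ≤ ∑' n, ENNReal.ofReal (c n) * S :=
            ENNReal.tsum_le_tsum hb_le
        _ = (∑' n, ENNReal.ofReal (c n)) * S := ENNReal.tsum_mul_right
        _ = ENNReal.ofReal C * S := by
            rw [← ENNReal.ofReal_tsum_of_nonneg hcnn hCsum, ← hC]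
    exact h1.trans h2
  refine ⟨main, ?_⟩
  have hterm : ∀ k, ENNReal.ofReal ((C * a k) * ‖⟪v k, x⟫_ℂ‖ ^ 2)
      = ENNReal.ofReal C * ENNReal.ofReal (a k * ‖⟪v k, x⟫_ℂ‖ ^ 2) := by
    intro k
    rw [mul_assoc, ENNReal.ofReal_mul hCnn]
  calc ENNReal.ofReal (‖x‖ ^ 2) ≤ ENNReal.ofReal C * S := main
    _ = ∑' k : ℕ, ENNReal.ofReal C * ENNReal.ofReal (a k * ‖⟪v k, x⟫_ℂ‖ ^ 2) := by
        rw [hS_def, ENNReal.tsum_mul_left]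
    _ = ∑' k : ℕ, ENNReal.ofReal ((C * a k) * ‖⟪v k, x⟫_ℂ‖ ^ 2) :=
        tsum_congr fun k => (hterm k).symm
end
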